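/- arXiv:1612.06281 — 3 statements merged into one kernel-verified Lean document; each statement's English description precedes it below -/
import Mathlib

section
/- Let μ be a probability measure on T^p, and let γ₀, γ₁ ∈ D_μ coincide for all x outside a Borel set E ⊂ T^p. Then the 1-Wasserstein distance satisfies d₁(μ∗γ₀, μ∗γ₁) ≤ √p · ∫_{E×ℝ^p} |γ₀(x,v) − γ₁(x,v)| dμ(x) dv. -/
/-!
Write `ν = μ ⊗ Leb` and `T (x, v) = x - [v]`, so that `∫ f d(μ∗γ) = ∫ f(T z) γ z dν`. Both
densities have total mass one, hence for a test function `f` the difference of its integrals is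
`∫ (f(T z) - f 0) (γ₀ z - γ₁ z) dν`. A function that is 1-Lipschitz for the torus metric varies
by at most the diameter `√p`, and `γ₀ - γ₁` vanishes off `E × ℝ^p`.
-/

open MeasureTheory Real

noncomputable section

/-- Projection `ℝ^p → T^p`. -/
def projT {p : ℕ} (v : EuclideanSpace ℝ (Fin p)) : Fin p → AddCircle (1 : ℝ) :=
  fun i => (v i : AddCircle (1 : ℝ))

/-- The jump convolution `μ∗γ`. -/
def convM {p : ℕ} (μ : Measure (Fin p → AddCircle (1 : ℝ)))
    (γ : (Fin p → AddCircle (1 : ℝ)) × EuclideanSpace ℝ (Fin p) → ℝ) :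
    Measure (Fin p → AddCircle (1 : ℝ)) :=
  Measure.map (fun z => z.1 - projT z.2)
    ((μ.prod volume).withDensity fun z => ENNReal.ofReal (γ z))

/-- The quotient Euclidean distance `|x−y|_{T^p}` on the torus. -/
def torusDist {p : ℕ} (x y : Fin p → AddCircle (1 : ℝ)) : ℝ :=
  Real.sqrt (∑ i, dist (x i) (y i) ^ 2)

/-- The 1-Wasserstein distance via Kantorovich duality:
`d₁(μ,ν) = sup { ∫f dμ − ∫f dν : f 1-Lipschitz for the torus metric }`. -/
def W1 {p : ℕ} (μ ν : Measure (Fin p → AddCircle (1 : ℝ))) : ℝ :=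
  sSup {r | ∃ f : (Fin p → AddCircle (1 : ℝ)) → ℝ,
    (∀ x y, |f x - f y| ≤ torusDist x y) ∧ r = (∫ x, f x ∂μ) - ∫ x, f x ∂ν}

section Torus

variable {p : ℕ}

theorem torusDist_le_sqrt_mul_dist (x y : Fin p → AddCircle (1 : ℝ)) :
    torusDist x y ≤ √p * dist x y := by
  have hsum : ∑ i, dist (x i) (y i) ^ 2 ≤ p * dist x y ^ 2 := by
    simpa using Finset.sum_le_sum (s := Finset.univ) fun i _ =>
      pow_le_pow_left₀ dist_nonneg (dist_le_pi_dist x y i) 2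
  calc torusDist x y ≤ √(p * dist x y ^ 2) := Real.sqrt_le_sqrt hsum
    _ = √p * dist x y := by rw [Real.sqrt_mul (Nat.cast_nonneg p), Real.sqrt_sq dist_nonneg]

theorem torusDist_le_sqrt (x y : Fin p → AddCircle (1 : ℝ)) : torusDist x y ≤ √p := by
  have hcoord : ∀ i, dist (x i) (y i) ≤ 1 := fun i => by
    have := AddCircle.norm_le_half_period 1 (x := x i - y i) one_ne_zero
    rw [dist_eq_norm]
    linarith
  have hsum : ∑ i, dist (x i) (y i) ^ 2 ≤ p := by
    simpa using Finset.sum_le_sum (s := Finset.univ) fun i _ =>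
      pow_le_one₀ (n := 2) dist_nonneg (hcoord i)
  exact Real.sqrt_le_sqrt hsum

theorem continuous_of_abs_sub_le_torusDist {f : (Fin p → AddCircle (1 : ℝ)) → ℝ}
    (hf : ∀ x y, |f x - f y| ≤ torusDist x y) : Continuous f := by
  refine (LipschitzWith.of_dist_le_mul (K := (√p).toNNReal) fun x y => ?_).continuous
  rw [Real.dist_eq, Real.coe_toNNReal _ (Real.sqrt_nonneg _)]
  exact (hf x y).trans (torusDist_le_sqrt_mul_dist x y)

theorem continuous_sub_projT :
    Continuous fun z : (Fin p → AddCircle (1 : ℝ)) × EuclideanSpace ℝ (Fin p) => z.1 - projT z.2 :=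
  continuous_fst.sub <| continuous_pi fun i =>
    (AddCircle.continuous_mk' 1).comp ((EuclideanSpace.proj i).continuous.comp continuous_snd)

end Torus

section Kernel

variable {X Y : Type*} [MeasurableSpace X] [MeasurableSpace Y] {μ : Measure X} {ν : Measure Y}
  {γ : X × Y → ℝ}

theorem integrable_of_ae_integral_eq_one [IsFiniteMeasure μ] [SFinite ν]
    (hm : AEStronglyMeasurable γ (μ.prod ν)) (hpos : ∀ z, 0 ≤ γ z)
    (hone : ∀ᵐ x ∂μ, ∫ v, γ (x, v) ∂ν = 1) : Integrable γ (μ.prod ν) := by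
  rw [integrable_prod_iff hm]
  constructor
  · filter_upwards [hone] with x hx
    by_contra h
    simp [integral_undef h] at hx
  · refine (integrable_const (1 : ℝ)).congr ?_
    filter_upwards [hone] with x hx
    simp_rw [Real.norm_of_nonneg (hpos _), hx]

theorem integral_prod_eq_one [IsProbabilityMeasure μ] [SFinite ν] (hint : Integrable γ (μ.prod ν))
    (hone : ∀ᵐ x ∂μ, ∫ v, γ (x, v) ∂ν = 1) : ∫ z, γ z ∂(μ.prod ν) = 1 := by
  simp [integral_prod _ hint, integral_congr_ae hone]

end Kernel

theorem integral_map_withDensity_ofReal {Z W : Type*} [MeasurableSpace Z] [MeasurableSpace W]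
    {ν : Measure Z} {γ : Z → ℝ} {T : Z → W} {f : W → ℝ} (hT : Measurable T)
    (hf : AEStronglyMeasurable f (Measure.map T (ν.withDensity fun z => ENNReal.ofReal (γ z))))
    (hγ : Measurable γ) (hpos : ∀ z, 0 ≤ γ z) :
    ∫ y, f y ∂(Measure.map T (ν.withDensity fun z => ENNReal.ofReal (γ z))) =
      ∫ z, f (T z) * γ z ∂ν := by
  rw [integral_map hT.aemeasurable hf,
    integral_withDensity_eq_integral_toReal_smul hγ.ennreal_ofReal
      (.of_forall fun _ => ENNReal.ofReal_lt_top)]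
  simp_rw [ENNReal.toReal_ofReal (hpos _), smul_eq_mul, mul_comm]

theorem integral_convM {p : ℕ} (μ : Measure (Fin p → AddCircle (1 : ℝ)))
    {γ : (Fin p → AddCircle (1 : ℝ)) × EuclideanSpace ℝ (Fin p) → ℝ} (hγ : Measurable γ)
    (hpos : ∀ z, 0 ≤ γ z) {f : (Fin p → AddCircle (1 : ℝ)) → ℝ} (hf : Continuous f) :
    ∫ y, f y ∂(convM μ γ) = ∫ z, f (z.1 - projT z.2) * γ z ∂(μ.prod volume) :=
  integral_map_withDensity_ofReal continuous_sub_projT.measurable hf.aestronglyMeasurable hγ hpos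

theorem integral_mul_sub_integral_mul_le {Z : Type*} [MeasurableSpace Z] {ν : Measure Z}
    {γ₀ γ₁ h : Z → ℝ} {c M : ℝ} (h₀ : Integrable γ₀ ν) (h₁ : Integrable γ₁ ν)
    (hmass : ∫ z, γ₀ z ∂ν = ∫ z, γ₁ z ∂ν) (hh : AEStronglyMeasurable h ν)
    (hosc : ∀ z, |h z - c| ≤ M) :
    ∫ z, h z * γ₀ z ∂ν - ∫ z, h z * γ₁ z ∂ν ≤ M * ∫ z, |γ₀ z - γ₁ z| ∂ν := by
  have hbdd : ∀ z, ‖h z‖ ≤ M + |c| := fun z => by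
    have := abs_sub_abs_le_abs_sub (h z) c
    rw [Real.norm_eq_abs]
    linarith [hosc z]
  have hdiff : Integrable (fun z => γ₀ z - γ₁ z) ν := h₀.sub h₁
  have hosc_int : Integrable (fun z => (h z - c) * (γ₀ z - γ₁ z)) ν :=
    hdiff.bdd_mul (hh.sub aestronglyMeasurable_const) (c := M)
      (.of_forall fun z => (Real.norm_eq_abs _).trans_le (hosc z))
  have hrecenter : ∫ z, h z * γ₀ z ∂ν - ∫ z, h z * γ₁ z ∂ν =
      ∫ z, (h z - c) * (γ₀ z - γ₁ z) ∂ν := by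
    have hc : ∫ z, c * (γ₀ z - γ₁ z) ∂ν = 0 := by
      rw [integral_const_mul, integral_sub h₀ h₁, hmass, sub_self, mul_zero]
    have hsplit : ∀ z, h z * γ₀ z - h z * γ₁ z = (h z - c) * (γ₀ z - γ₁ z) + c * (γ₀ z - γ₁ z) :=
      fun z => by ring
    rw [← integral_sub (h₀.bdd_mul hh (.of_forall hbdd)) (h₁.bdd_mul hh (.of_forall hbdd))]
    simp_rw [hsplit]
    rw [integral_add hosc_int (hdiff.const_mul c), hc, add_zero]
  rw [hrecenter, ← integral_const_mul]
  refine integral_mono hosc_int (hdiff.abs.const_mul M) fun z => ?_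
  calc (h z - c) * (γ₀ z - γ₁ z) ≤ |h z - c| * |γ₀ z - γ₁ z| := by
        rw [← abs_mul]; exact le_abs_self _
    _ ≤ M * |γ₀ z - γ₁ z| := mul_le_mul_of_nonneg_right (hosc z) (abs_nonneg _)

theorem W1_convM_le_general (p : ℕ) (μ : Measure (Fin p → AddCircle (1 : ℝ)))
    [IsProbabilityMeasure μ]
    (γ₀ γ₁ : (Fin p → AddCircle (1 : ℝ)) × EuclideanSpace ℝ (Fin p) → ℝ)
    (h₀meas : Measurable γ₀) (h₀pos : ∀ z, 0 ≤ γ₀ z)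
    (h₀one : ∀ᵐ x ∂μ, (∫ v, γ₀ (x, v)) = 1)
    (h₁meas : Measurable γ₁) (h₁pos : ∀ z, 0 ≤ γ₁ z)
    (h₁one : ∀ᵐ x ∂μ, (∫ v, γ₁ (x, v)) = 1)
    (E : Set (Fin p → AddCircle (1 : ℝ)))
    (hcoincide : ∀ x ∉ E, ∀ v, γ₀ (x, v) = γ₁ (x, v)) :
    W1 (convM μ γ₀) (convM μ γ₁) ≤
      Real.sqrt p *
        ∫ z in E ×ˢ (Set.univ : Set (EuclideanSpace ℝ (Fin p))),
          |γ₀ z - γ₁ z| ∂(μ.prod volume) := by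
  have hint₀ := integrable_of_ae_integral_eq_one h₀meas.aestronglyMeasurable h₀pos h₀one
  have hint₁ := integrable_of_ae_integral_eq_one h₁meas.aestronglyMeasurable h₁pos h₁one
  have hmass : ∫ z, γ₀ z ∂(μ.prod volume) = ∫ z, γ₁ z ∂(μ.prod volume) := by
    rw [integral_prod_eq_one hint₀ h₀one, integral_prod_eq_one hint₁ h₁one]
  have hoff : ∫ z, |γ₀ z - γ₁ z| ∂(μ.prod volume) =
      ∫ z in E ×ˢ Set.univ, |γ₀ z - γ₁ z| ∂(μ.prod volume) :=
    (setIntegral_eq_integral_of_forall_compl_eq_zero fun z hz => by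
      rw [hcoincide z.1 (fun hE => hz ⟨hE, trivial⟩) z.2, sub_self, abs_zero]).symm
  refine csSup_le ⟨0, 0, fun _ _ => by simp [torusDist], by simp⟩ ?_
  rintro _ ⟨f, hf, rfl⟩
  have hfc := continuous_of_abs_sub_le_torusDist hf
  rw [integral_convM μ h₀meas h₀pos hfc, integral_convM μ h₁meas h₁pos hfc, ← hoff]
  exact integral_mul_sub_integral_mul_le hint₀ hint₁ hmass
    (hfc.comp continuous_sub_projT).aestronglyMeasurable
    fun z => (hf _ 0).trans (torusDist_le_sqrt _ 0)

/-- If `γ₀, γ₁ ∈ D_μ` coincide for all `x` outside a Borel set `E ⊂ T^p`, then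
`d₁(μ∗γ₀, μ∗γ₁) ≤ √p · ∫_{E×ℝ^p} |γ₀ − γ₁| dμ dv`. -/
theorem W1_convM_le (p : ℕ) (μ : Measure (Fin p → AddCircle (1 : ℝ)))
    [IsProbabilityMeasure μ]
    (γ₀ γ₁ : (Fin p → AddCircle (1 : ℝ)) × EuclideanSpace ℝ (Fin p) → ℝ)
    (h₀meas : Measurable γ₀) (h₀pos : ∀ z, 0 ≤ γ₀ z)
    (h₀one : ∀ᵐ x ∂μ, (∫ v, γ₀ (x, v)) = 1)
    (h₁meas : Measurable γ₁) (h₁pos : ∀ z, 0 ≤ γ₁ z)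
    (h₁one : ∀ᵐ x ∂μ, (∫ v, γ₁ (x, v)) = 1)
    (E : Set (Fin p → AddCircle (1 : ℝ))) (hE : MeasurableSet E)
    (hcoincide : ∀ x ∉ E, ∀ v, γ₀ (x, v) = γ₁ (x, v)) :
    W1 (convM μ γ₀) (convM μ γ₁) ≤
      Real.sqrt p *
        ∫ z in E ×ˢ (Set.univ : Set (EuclideanSpace ℝ (Fin p))),
          |γ₀ z - γ₁ z| ∂(μ.prod volume) :=
  W1_convM_le_general p μ γ₀ γ₁ h₀meas h₀pos h₀one h₁meas h₁pos h₁one E hcoincide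
end
end

section
/- Let μ₀, μ₁ be probability measures on T^p, Γ a transfer plan between them with disintegration Γ = Γ_y ⊗ μ₁, and γ₀ ∈ D_{μ₀}. Define γ₁(y,v) = ∫ γ₀(x,v) dΓ_y(x). Then γ₁ ∈ D_{μ₁}. -/
open MeasureTheory

/-!
Let `N` be the `μ₀`-null set of base points `x` where `γ₀(x, ·)` does not integrate to `1`.
Its preimage under the first projection is `Γ`-null, so disintegrating along the second marginal
shows that `Γ_y N = 0` for `μ₁`-a.e. `y`. For such `y`, Fubini on `Γ_y ⊗ dv` gives
`∫ γ₁(y, v) dv = ∫ (∫ γ₀(x, v) dv) dΓ_y(x) = 1`.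
-/

section Disintegration

variable {α β : Type*} [MeasurableSpace α] [MeasurableSpace β]

lemma ae_apply_eq_zero_of_disintegration {Γ : Measure (α × β)} [IsProbabilityMeasure Γ]
    {μ : Measure β} [IsProbabilityMeasure μ] {Γy : β → Measure α}
    [∀ y, IsProbabilityMeasure (Γy y)]
    (hdisint : ∀ F : α × β → ℝ, Measurable F → (∃ M, ∀ z, |F z| ≤ M) →
      (∫ z, F z ∂Γ) = ∫ y, (∫ x, F (x, y) ∂(Γy y)) ∂μ)
    {s : Set α} (hs : MeasurableSet s) (hs0 : Γ.map Prod.fst s = 0) :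
    ∀ᵐ y ∂μ, Γy y s = 0 := by
  have hind : Measurable (s.indicator (1 : α → ℝ)) := measurable_const.indicator hs
  have hbdd : ∃ M, ∀ z : α × β, |1 + s.indicator (1 : α → ℝ) z.1| ≤ M := by
    refine ⟨2, fun z => ?_⟩
    by_cases hz : z.1 ∈ s <;> norm_num [hz]
  have hΓ : ∫ z, 1 + s.indicator (1 : α → ℝ) z.1 ∂Γ = 1 := by
    have hint : Integrable (fun z : α × β => s.indicator (1 : α → ℝ) z.1) Γ :=
      (integrable_const 1).indicator (measurable_fst hs)
    rw [integral_add (integrable_const 1) hint, ← integral_map measurable_fst.aemeasurable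
      hind.aestronglyMeasurable, integral_indicator_one hs, measureReal_def, hs0]
    simp
  have hfiber : ∀ y, ∫ x, 1 + s.indicator (1 : α → ℝ) (x, y).1 ∂(Γy y) = 1 + (Γy y).real s := by
    intro y
    rw [integral_add (integrable_const 1) ((integrable_const 1).indicator hs),
      integral_indicator_one hs]
    simp
  have hdis := hdisint (fun z => 1 + s.indicator 1 z.1)
    (measurable_const.add (hind.comp measurable_fst)) hbdd
  simp only [hΓ, hfiber] at hdis
  -- `1 + 𝟙_s` rather than `𝟙_s`: a nonzero integral yields integrability of `y ↦ Γy y s` for free.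
  have hshift_int : Integrable (fun y => 1 + (Γy y).real s) μ :=
    Integrable.of_integral_ne_zero (by rw [← hdis]; exact one_ne_zero)
  have hmass_int : Integrable (fun y => (Γy y).real s) μ :=
    (hshift_int.sub (integrable_const 1)).congr (ae_of_all _ fun y => by simp)
  have hzero : ∫ y, (Γy y).real s ∂μ = 0 := by
    rw [integral_add (integrable_const 1) hmass_int] at hdis
    simpa using hdis.symm
  filter_upwards [(integral_eq_zero_iff_of_nonneg (fun y => measureReal_nonneg) hmass_int).mp hzero]
    with y hy
  exact (measureReal_eq_zero_iff).mp hy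

end Disintegration

section Fubini

variable {α β : Type*} [MeasurableSpace α] [MeasurableSpace β] {μ : Measure α} {ν : Measure β}
  [SFinite ν] {f : α × β → ℝ} {c : ℝ}

lemma integrable_prod_of_nonneg_of_ae_integral_eq [IsFiniteMeasure μ]
    (hf : AEStronglyMeasurable f (μ.prod ν)) (hf0 : ∀ z, 0 ≤ f z)
    (h : ∀ᵐ x ∂μ, ∫ y, f (x, y) ∂ν = c) (hc : c ≠ 0) :
    Integrable f (μ.prod ν) := by
  refine (integrable_prod_iff hf).mpr ⟨?_, ?_⟩
  · filter_upwards [h] with x hx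
    exact Integrable.of_integral_ne_zero (hx ▸ hc)
  · refine (integrable_const c).congr ?_
    filter_upwards [h] with x hx
    simp only [Real.norm_of_nonneg (hf0 _), hx]

lemma integral_integral_swap_of_ae_integral_eq [IsProbabilityMeasure μ]
    (hf : AEStronglyMeasurable f (μ.prod ν)) (hf0 : ∀ z, 0 ≤ f z)
    (h : ∀ᵐ x ∂μ, ∫ y, f (x, y) ∂ν = c) (hc : c ≠ 0) :
    ∫ y, ∫ x, f (x, y) ∂μ ∂ν = c := by
  rw [← integral_integral_swap (f := fun x y => f (x, y))
    (integrable_prod_of_nonneg_of_ae_integral_eq hf hf0 h hc), integral_congr_ae h]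
  simp

end Fubini

theorem pushforward_by_plans_mem_D_general (p : ℕ)
    (μ₀ μ₁ : Measure (Fin p → AddCircle (1 : ℝ)))
    [IsProbabilityMeasure μ₁]
    (Γ : Measure ((Fin p → AddCircle (1 : ℝ)) × (Fin p → AddCircle (1 : ℝ))))
    [IsProbabilityMeasure Γ]
    (hfst : Γ.map Prod.fst = μ₀)
    (Γy : (Fin p → AddCircle (1 : ℝ)) → Measure (Fin p → AddCircle (1 : ℝ)))
    (hΓyprob : ∀ y, IsProbabilityMeasure (Γy y))
    (hdisint : ∀ F : (Fin p → AddCircle (1 : ℝ)) × (Fin p → AddCircle (1 : ℝ)) → ℝ,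
      Measurable F → (∃ M, ∀ z, |F z| ≤ M) →
      (∫ z, F z ∂Γ) = ∫ y, (∫ x, F (x, y) ∂(Γy y)) ∂μ₁)
    (γ₀ : (Fin p → AddCircle (1 : ℝ)) × EuclideanSpace ℝ (Fin p) → ℝ)
    (hmeas : Measurable γ₀) (hpos : ∀ z, 0 ≤ γ₀ z)
    (hone : ∀ᵐ x ∂μ₀, (∫ v, γ₀ (x, v)) = 1) :
    (∀ y v, 0 ≤ ∫ x, γ₀ (x, v) ∂(Γy y)) ∧
    (∀ᵐ y ∂μ₁, (∫ v, (∫ x, γ₀ (x, v) ∂(Γy y))) = 1) := by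
  refine ⟨fun y v => integral_nonneg fun x => hpos _, ?_⟩
  let N := {x | ¬ (∫ v, γ₀ (x, v)) = 1}
  have hN : MeasurableSet N :=
    (hmeas.stronglyMeasurable.integral_prod_right'.measurable (measurableSet_singleton 1)).compl
  have hN0 : Γ.map Prod.fst N = 0 := by rw [hfst]; exact ae_iff.mp hone
  filter_upwards [ae_apply_eq_zero_of_disintegration (Γy := Γy) hdisint hN hN0] with y hy
  exact integral_integral_swap_of_ae_integral_eq hmeas.aestronglyMeasurable hpos (ae_iff.mpr hy)
    one_ne_zero

/-- Push-forward by plans: if `Γ` is a transfer plan between probability measures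
`μ₀, μ₁` on `T^p`, with disintegration `Γ = Γ_y ⊗ μ₁` with respect to the second
marginal, and `γ₀ ∈ D_{μ₀}`, then `γ₁(y,v) := ∫ γ₀(x,v) dΓ_y(x)` belongs to `D_{μ₁}`. -/
theorem pushforward_by_plans_mem_D (p : ℕ)
    (μ₀ μ₁ : Measure (Fin p → AddCircle (1 : ℝ)))
    [IsProbabilityMeasure μ₀] [IsProbabilityMeasure μ₁]
    (Γ : Measure ((Fin p → AddCircle (1 : ℝ)) × (Fin p → AddCircle (1 : ℝ))))
    [IsProbabilityMeasure Γ]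
    (hfst : Γ.map Prod.fst = μ₀) (hsnd : Γ.map Prod.snd = μ₁)
    (Γy : (Fin p → AddCircle (1 : ℝ)) → Measure (Fin p → AddCircle (1 : ℝ)))
    (hΓyprob : ∀ y, IsProbabilityMeasure (Γy y))
    (hdisint : ∀ F : (Fin p → AddCircle (1 : ℝ)) × (Fin p → AddCircle (1 : ℝ)) → ℝ,
      Measurable F → (∃ M, ∀ z, |F z| ≤ M) →
      (∫ z, F z ∂Γ) = ∫ y, (∫ x, F (x, y) ∂(Γy y)) ∂μ₁)
    (γ₀ : (Fin p → AddCircle (1 : ℝ)) × EuclideanSpace ℝ (Fin p) → ℝ)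
    (hmeas : Measurable γ₀) (hpos : ∀ z, 0 ≤ γ₀ z)
    (hone : ∀ᵐ x ∂μ₀, (∫ v, γ₀ (x, v)) = 1) :
    (∀ y v, 0 ≤ ∫ x, γ₀ (x, v) ∂(Γy y)) ∧
    (∀ᵐ y ∂μ₁, (∫ v, (∫ x, γ₀ (x, v) ∂(Γy y))) = 1) :=
  pushforward_by_plans_mem_D_general p μ₀ μ₁ Γ hfst Γy hΓyprob hdisint γ₀ hmeas hpos hone
end

section
/- Suppose a minimizing density γ ∈ D_μ for (G^h_t U)(μ) satisfies γ(x,v) ≤ C for μ⊗Lebesgue-a.e. (x,v) with x restricted to T^p, and γ(x,v) ≥ 1/C for a.e. (x,v) ∈ T^p × B(0, 2√p). Then the measure μ∗γ has a density ρ with respect to Lebesgue measure on T^p satisfying ρ(z) ≥ Vol(Q)/C = 1/C for a.e. z, where Q = [−1/2, 1/2)^p; in particular ‖1/ρ‖_{L^∞} ≤ C. -/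
open MeasureTheory Real
open scoped ENNReal

noncomputable section

/-!
Displacing a point `x` of the torus by a uniform random vector `v` of the unit cube
`Q ⊆ ℝ^p` gives the uniform distribution, since `projT` pushes Lebesgue measure on `Q`
forward to Haar measure on `T^p`. As `Q ⊆ B(0, 2√p)`, the density `γ` is at least `1 / C`
on `T^p × Q`, so `μ∗γ ≥ (1 / C) · volume` as measures. On the other hand `μ∗γ ≪ volume`,
because `projT` maps Lebesgue-null sets to null sets (cover `ℝ^p` by the integer translates
of `Q`). The Radon–Nikodym derivative of `μ∗γ` is then the required density.
-/

open Set Metric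

local notation "𝕋" p:max => Fin p → AddCircle (1 : ℝ)

section General

variable {α : Type*} [MeasurableSpace α]

theorem smul_restrict_le_withDensity {ρ : Measure α} {A : Set α} (hA : MeasurableSet A)
    {c : ℝ≥0∞} {f : α → ℝ≥0∞} (h : ∀ᵐ x ∂ρ, x ∈ A → c ≤ f x) :
    c • ρ.restrict A ≤ ρ.withDensity f := by
  rw [← withDensity_const, ← withDensity_indicator hA]
  refine withDensity_mono ?_
  filter_upwards [h] with x hx
  by_cases hxA : x ∈ A <;> simp [hxA, hx]

theorem exists_withDensity_ge_of_smul_le {ν m : Measure α} [SFinite ν] [SigmaFinite m]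
    (hac : ν ≪ m) {c : ℝ≥0∞} (hle : c • m ≤ ν) :
    ∃ ρ : α → ℝ≥0∞, ν = m.withDensity ρ ∧ ∀ᵐ x ∂m, c ≤ ρ x := by
  have : ν.HaveLebesgueDecomposition m := by
    rw [← sum_sfiniteSeq ν]
    infer_instance
  have hν := Measure.withDensity_rnDeriv_eq ν m hac
  refine ⟨ν.rnDeriv m, hν.symm,
    ae_le_of_forall_setLIntegral_le_of_sigmaFinite₀ aemeasurable_const fun s hs _ => ?_⟩
  calc ∫⁻ _ in s, c ∂m = (c • m) s := by simp
    _ ≤ ν s := hle s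
    _ = ∫⁻ x in s, ν.rnDeriv m x ∂m := by rw [← withDensity_apply _ hs, hν]

variable {G : Type*} [MeasurableSpace G] [AddGroup G] [MeasurableAdd G] [MeasurableSub₂ G]
  [MeasurableNeg G]

theorem map_sub_prod_eq_smul (μ ν : Measure G) [SFinite μ] [SFinite ν]
    [ν.IsAddLeftInvariant] [ν.IsNegInvariant] :
    (μ.prod ν).map (fun z => z.1 - z.2) = μ univ • ν := by
  ext s hs
  have hsub : Measurable fun z : G × G => z.1 - z.2 := by fun_prop
  rw [Measure.map_apply hsub hs, Measure.prod_apply (hsub hs)]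
  simp_rw [Measure.smul_apply, smul_eq_mul, preimage_preimage,
    (Measure.measurePreserving_sub_left ν _).measure_preimage hs.nullMeasurableSet]
  rw [lintegral_const, mul_comm]

end General

namespace ConvM

variable {p : ℕ}

instance : (volume : Measure (𝕋 p)).IsNegInvariant :=
  Measure.pi.isNegInvariant _

/-- Left-open so that `UnitAddCircle.measurePreserving_mk` applies; the paper's
`Q = [-1/2, 1/2)^p` becomes `cube (fun _ => -(1 / 2))`. -/
def cube (a : Fin p → ℝ) : Set (EuclideanSpace ℝ (Fin p)) :=
  {v | ∀ i, v i ∈ Ioc (a i) (a i + 1)}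

theorem cube_eq_preimage (a : Fin p → ℝ) :
    cube a = (MeasurableEquiv.toLp 2 (Fin p → ℝ)).symm ⁻¹'
      univ.pi fun i => Ioc (a i) (a i + 1) := by
  ext v
  simp [cube]

theorem measurableSet_cube (a : Fin p → ℝ) : MeasurableSet (cube a) := by
  rw [cube_eq_preimage]
  exact MeasurableEquiv.measurable _ (MeasurableSet.univ_pi fun _ => measurableSet_Ioc)

theorem iUnion_cube_intCast : ⋃ n : Fin p → ℤ, cube (fun i => (n i : ℝ)) = univ := by
  refine eq_univ_of_forall fun v => mem_iUnion.2 ⟨fun i => ⌈v i⌉ - 1, fun i => ?_⟩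
  constructor <;> push_cast <;> linarith [Int.ceil_lt_add_one (v i), Int.le_ceil (v i)]

theorem cube_subset_ball (hp : p ≠ 0) :
    cube (fun _ => -(1 / 2)) ⊆ ball (0 : EuclideanSpace ℝ (Fin p)) (2 * √p) := by
  intro v hv
  have hp' : (0 : ℝ) < p := by positivity
  have hsq : ‖v‖ ^ 2 < (2 * √p) ^ 2 := by
    rw [EuclideanSpace.norm_sq_eq, mul_pow, sq_sqrt hp'.le]
    calc ∑ i, ‖v i‖ ^ 2 ≤ ∑ _i : Fin p, (1 : ℝ) := by
          refine Finset.sum_le_sum fun i _ => ?_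
          obtain ⟨hlo, hhi⟩ := hv i
          rw [Real.norm_eq_abs, sq_abs]
          nlinarith
      _ < 2 ^ 2 * p := by
        simp only [Finset.sum_const, Finset.card_univ, Fintype.card_fin, nsmul_eq_mul, mul_one]
        linarith
  rw [mem_ball_zero_iff]
  exact lt_of_pow_lt_pow_left₀ 2 (by positivity) hsq

theorem measurable_projT : Measurable (projT (p := p)) := by
  unfold projT
  fun_prop

theorem measurePreserving_projT_cube (a : Fin p → ℝ) :
    MeasurePreserving projT (volume.restrict (cube a)) volume := by
  have hpi : MeasurePreserving (fun (x : Fin p → ℝ) i => (x i : AddCircle (1 : ℝ)))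
      (volume.restrict (univ.pi fun i => Ioc (a i) (a i + 1))) volume := by
    rw [volume_pi, Measure.restrict_pi_pi]
    exact measurePreserving_pi _ _ fun i => UnitAddCircle.measurePreserving_mk (a i)
  rw [cube_eq_preimage]
  exact hpi.comp <|
    (EuclideanSpace.volume_preserving_symm_measurableEquiv_toLp (Fin p)).restrict_preimage
      (MeasurableSet.univ_pi fun _ => measurableSet_Ioc)

theorem quasiMeasurePreserving_projT :
    Measure.QuasiMeasurePreserving (projT (p := p)) volume volume := by
  refine ⟨measurable_projT, ?_⟩
  have hcover : (volume : Measure (EuclideanSpace ℝ (Fin p)))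
      ≤ Measure.sum fun n : Fin p → ℤ => volume.restrict (cube fun i => (n i : ℝ)) := by
    simpa [iUnion_cube_intCast] using Measure.restrict_iUnion_le (μ := volume)
      (s := fun n : Fin p → ℤ => cube fun i => (n i : ℝ))
  refine (Measure.absolutelyContinuous_of_le (Measure.map_mono hcover measurable_projT)).trans ?_
  rw [Measure.map_sum measurable_projT.aemeasurable]
  exact Measure.absolutelyContinuous_sum_left fun n => by
    rw [(measurePreserving_projT_cube _).map_eq]

theorem quasiMeasurePreserving_sub_projT (μ : Measure (𝕋 p)) [SFinite μ] :
    Measure.QuasiMeasurePreserving (fun z : 𝕋 p × EuclideanSpace ℝ (Fin p) => z.1 - projT z.2)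
      (μ.prod volume) volume := by
  have hsub : Measure.QuasiMeasurePreserving (fun z : 𝕋 p × 𝕋 p => z.1 - z.2)
      (μ.prod volume) volume :=
    ⟨by fun_prop, by rw [map_sub_prod_eq_smul]; exact Measure.smul_absolutelyContinuous⟩
  exact hsub.comp (QuasiMeasurePreserving.prodMap (.id μ) quasiMeasurePreserving_projT)

theorem map_sub_projT_prod_cube (μ : Measure (𝕋 p)) [IsProbabilityMeasure μ]
    (a : Fin p → ℝ) :
    (μ.prod (volume.restrict (cube a))).map (fun z => z.1 - projT z.2) = volume := by
  have hprod := ((MeasurePreserving.id μ).prod (measurePreserving_projT_cube a)).map_eq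
  calc _ = ((μ.prod (volume.restrict (cube a))).map (Prod.map id projT)).map
        (fun z => z.1 - z.2) := by
        rw [Measure.map_map (by fun_prop) (measurable_id.prodMap measurable_projT)]
        rfl
    _ = volume := by rw [hprod, map_sub_prod_eq_smul, measure_univ, one_smul]

theorem ae_one_div_le_of_fin_zero (μ : Measure (𝕋 0))
    (γ : 𝕋 0 × EuclideanSpace ℝ (Fin 0) → ℝ) {C : ℝ}
    (hone : ∀ᵐ x ∂μ, ∫ v, γ (x, v) = 1)
    (hupper : ∀ᵐ z ∂(μ.prod volume), γ z ≤ C) :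
    ∀ᵐ z ∂(μ.prod volume), 1 / C ≤ γ z := by
  have hvol : (volume : Measure (EuclideanSpace ℝ (Fin 0))).real univ = 1 := by
    have := (EuclideanSpace.volume_preserving_symm_measurableEquiv_toLp (Fin 0)).measure_preimage
      MeasurableSet.univ.nullMeasurableSet
    simp_all [Measure.real, volume_pi]
  filter_upwards [Measure.quasiMeasurePreserving_fst.ae hone, hupper] with ⟨x, v⟩ hx hle
  rw [integral_unique, hvol, one_smul] at hx
  have hγ : γ (x, v) = 1 := (congrArg (fun w => γ (x, w)) (Subsingleton.elim v _)).trans hx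
  rw [hγ] at hle ⊢
  exact div_le_one_of_le₀ hle (zero_le_one.trans hle)

variable (μ : Measure (𝕋 p)) (γ : 𝕋 p × EuclideanSpace ℝ (Fin p) → ℝ)

instance [SFinite μ] : SFinite (convM μ γ) := by
  unfold convM
  infer_instance

theorem convM_absolutelyContinuous [SFinite μ] : convM μ γ ≪ volume :=
  ((withDensity_absolutelyContinuous _ _).map
    (quasiMeasurePreserving_sub_projT μ).measurable).trans
    (quasiMeasurePreserving_sub_projT μ).absolutelyContinuous

theorem smul_volume_le_convM [IsProbabilityMeasure μ] {c : ℝ} (a : Fin p → ℝ)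
    (h : ∀ᵐ z ∂(μ.prod volume), z.2 ∈ cube a → c ≤ γ z) :
    ENNReal.ofReal c • volume ≤ convM μ γ := by
  rw [← map_sub_projT_prod_cube μ a, ← Measure.map_smul, ← Measure.restrict_univ (μ := μ),
    Measure.prod_restrict, Measure.restrict_univ]
  refine Measure.map_mono (smul_restrict_le_withDensity
    (MeasurableSet.univ.prod (measurableSet_cube a)) ?_)
    (quasiMeasurePreserving_sub_projT μ).measurable
  filter_upwards [h] with z hz hzQ
  exact ENNReal.ofReal_le_ofReal (hz hzQ.2)

end ConvM

open ConvM

theorem convM_density_lower_bound_general (p : ℕ) (C : ℝ)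
    (μ : Measure (Fin p → AddCircle (1 : ℝ))) [IsProbabilityMeasure μ]
    (γ : (Fin p → AddCircle (1 : ℝ)) × EuclideanSpace ℝ (Fin p) → ℝ)
    (hone : ∀ᵐ x ∂μ, (∫ v, γ (x, v)) = 1)
    (hupper : ∀ᵐ z ∂(μ.prod volume), γ z ≤ C)
    (hlower : ∀ᵐ z ∂(μ.prod volume),
      z.2 ∈ Metric.ball (0 : EuclideanSpace ℝ (Fin p)) (2 * Real.sqrt p) → 1 / C ≤ γ z) :
    ∃ ρ : (Fin p → AddCircle (1 : ℝ)) → ℝ≥0∞,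
      convM μ γ = (volume : Measure (Fin p → AddCircle (1 : ℝ))).withDensity ρ ∧
      ∀ᵐ z ∂(volume : Measure (Fin p → AddCircle (1 : ℝ))), ENNReal.ofReal (1 / C) ≤ ρ z := by
  have hcube : ∀ᵐ z ∂(μ.prod volume), z.2 ∈ cube (fun _ => -(1 / 2)) → 1 / C ≤ γ z := by
    rcases eq_or_ne p 0 with rfl | hp
    -- for `p = 0` the ball `B(0, 0)` is empty; instead `hone` forces `γ = 1`, so `1 ≤ C`
    · filter_upwards [ae_one_div_le_of_fin_zero μ γ hone hupper] with z hz _ using hz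
    · filter_upwards [hlower] with z hz hzQ using hz (cube_subset_ball hp hzQ)
  exact exists_withDensity_ge_of_smul_le (convM_absolutelyContinuous μ γ)
    (smul_volume_le_convM μ γ _ hcube)

/-- If `γ ∈ D_μ` satisfies `γ ≤ C` a.e. and `γ ≥ 1/C` a.e. on `T^p × B(0, 2√p)`, then
`μ∗γ` has a density `ρ` with respect to Lebesgue measure on `T^p` with `ρ ≥ 1/C` a.e.;
in particular `‖1/ρ‖_∞ ≤ C`. -/
theorem convM_density_lower_bound (p : ℕ) (C : ℝ) (hC : 0 < C)
    (μ : Measure (Fin p → AddCircle (1 : ℝ))) [IsProbabilityMeasure μ]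
    (γ : (Fin p → AddCircle (1 : ℝ)) × EuclideanSpace ℝ (Fin p) → ℝ)
    (hmeas : Measurable γ) (hpos : ∀ z, 0 ≤ γ z)
    (hone : ∀ᵐ x ∂μ, (∫ v, γ (x, v)) = 1)
    (hupper : ∀ᵐ z ∂(μ.prod volume), γ z ≤ C)
    (hlower : ∀ᵐ z ∂(μ.prod volume),
      z.2 ∈ Metric.ball (0 : EuclideanSpace ℝ (Fin p)) (2 * Real.sqrt p) → 1 / C ≤ γ z) :
    ∃ ρ : (Fin p → AddCircle (1 : ℝ)) → ℝ≥0∞,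
      convM μ γ = (volume : Measure (Fin p → AddCircle (1 : ℝ))).withDensity ρ ∧
      ∀ᵐ z ∂(volume : Measure (Fin p → AddCircle (1 : ℝ))), ENNReal.ofReal (1 / C) ≤ ρ z :=
  convM_density_lower_bound_general p C μ γ hone hupper hlower
end
end
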